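/- arXiv:1207.3674 — 2 statements merged into one kernel-verified Lean document; each statement's English description precedes it below -/
import Mathlib

section
/- Compactness of matchings: let A and B be locally finite multisets in the extended open half-plane H°, and let δ ≥ 0. If for every η > δ there exists an η-matching between A and B, then there exists a δ-matching between A and B. -/
attribute [local instance] Classical.propDecidable

structure PersMod (k : Type) [Field k] (T : Type) [Preorder T] where
  space : T → Type
  [addCommGroup : ∀ t, AddCommGroup (space t)]
  [module : ∀ t, Module k (space t)]
  map : ∀ s t : T, s ≤ t → space s →ₗ[k] space t
  map_id : ∀ t, map t t le_rfl = LinearMap.id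
  map_comp : ∀ r s t (h1 : r ≤ s) (h2 : s ≤ t),
    (map s t h2).comp (map r s h1) = map r t (h1.trans h2)

attribute [instance] PersMod.addCommGroup PersMod.module

def PersIso {k : Type} [Field k] {T : Type} [Preorder T] (U V : PersMod k T) : Prop :=
  ∃ e : ∀ t, U.space t ≃ₗ[k] V.space t,
    ∀ s t (h : s ≤ t),
      (e t).toLinearMap.comp (U.map s t h) = (V.map s t h).comp (e s).toLinearMap

def IsIntervalSet {T : Type} [Preorder T] (J : Set T) : Prop :=
  J.Nonempty ∧ ∀ ⦃r s t : T⦄, r ∈ J → t ∈ J → r ≤ s → s ≤ t → s ∈ J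

noncomputable def intervalModule (k : Type) [Field k] (T : Type) [Preorder T]
    (J : Set T) (hJ : IsIntervalSet J) : PersMod k T where
  space t := PLift (t ∈ J) → k
  addCommGroup := fun _ => inferInstance
  module := fun _ => inferInstance
  map s t _ :=
    { toFun := fun f _ => if hs : s ∈ J then f ⟨hs⟩ else 0
      map_add' := fun f g => by
        funext ht; by_cases hs : s ∈ J <;> simp [hs]
      map_smul' := fun c f => by
        funext ht; by_cases hs : s ∈ J <;> simp [hs] }
  map_id t := by
    refine LinearMap.ext fun f => funext fun ht => ?_
    show (if hs : t ∈ J then f ⟨hs⟩ else 0) = f ht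
    rw [dif_pos ht.down]
  map_comp r s t h1 h2 := by
    refine LinearMap.ext fun f => funext fun ht => ?_
    show (if hs : s ∈ J then (if hr : r ∈ J then f ⟨hr⟩ else 0) else 0)
        = (if hr : r ∈ J then f ⟨hr⟩ else 0)
    by_cases hr : r ∈ J
    · have hs : s ∈ J := hJ.2 hr ht.down h1 h2
      simp [hr, hs]
    · by_cases hs : s ∈ J <;> simp [hr, hs]

noncomputable def dsum {k : Type} [Field k] {T : Type} [Preorder T] {L : Type}
    (V : L → PersMod k T) : PersMod k T where
  space t := DFinsupp (fun ℓ => (V ℓ).space t)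
  addCommGroup := fun _ => inferInstance
  module := fun _ => inferInstance
  map s t h := DFinsupp.mapRange.linearMap (fun ℓ => (V ℓ).map s t h)
  map_id t := by
    show DFinsupp.mapRange.linearMap (fun ℓ => (V ℓ).map t t le_rfl) = LinearMap.id
    have : (fun ℓ => (V ℓ).map t t le_rfl)
        = fun ℓ => (LinearMap.id : (V ℓ).space t →ₗ[k] (V ℓ).space t) :=
      funext fun ℓ => (V ℓ).map_id t
    rw [this]
    exact DFinsupp.mapRange.linearMap_id
  map_comp r s t h1 h2 := by
    show (DFinsupp.mapRange.linearMap (fun ℓ => (V ℓ).map s t h2)).comp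
        (DFinsupp.mapRange.linearMap (fun ℓ => (V ℓ).map r s h1))
      = DFinsupp.mapRange.linearMap (fun ℓ => (V ℓ).map r t (h1.trans h2))
    rw [← DFinsupp.mapRange.linearMap_comp]
    congr 1
    funext ℓ
    exact (V ℓ).map_comp r s t h1 h2

open scoped ENNReal

section Dim

noncomputable def edim (k : Type) [Field k] (M : Type) [AddCommGroup M] [Module k M] : ℕ∞ :=
  Cardinal.toENat (Module.rank k M)

noncomputable def erank {k : Type} [Field k] {M N : Type} [AddCommGroup M] [Module k M]
    [AddCommGroup N] [Module k N] (f : M →ₗ[k] N) : ℕ∞ :=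
  edim k (LinearMap.range f)

noncomputable def ecard (S : Type) : ℕ∞ := Cardinal.toENat (Cardinal.mk S)

end Dim

section Matchings

noncomputable def eDiff (x y : EReal) : ℝ≥0∞ :=
  if x = y then 0
  else if x = ⊤ ∨ x = ⊥ ∨ y = ⊤ ∨ y = ⊥ then ⊤
  else ENNReal.ofReal |x.toReal - y.toReal|

noncomputable def dPt (α β : EReal × EReal) : ℝ≥0∞ :=
  max (eDiff α.1 β.1) (eDiff α.2 β.2)

noncomputable def diagDist (α : EReal × EReal) : ℝ≥0∞ :=
  if α.1 = ⊥ ∨ α.2 = ⊤ then ⊤ else ENNReal.ofReal ((α.2.toReal - α.1.toReal) / 2)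

def IsMatching {α β : Type} (M : Set (α × β)) : Prop :=
  (∀ a b b', (a, b) ∈ M → (a, b') ∈ M → b = b') ∧
  (∀ a a' b, (a, b) ∈ M → (a', b) ∈ M → a = a')

def IsDeltaMatching {α β : Type} (A : α → EReal × EReal) (B : β → EReal × EReal)
    (δ : ℝ≥0∞) : Prop :=
  ∃ M : Set (α × β), IsMatching M ∧
    (∀ p ∈ M, dPt (A p.1) (B p.2) ≤ δ) ∧
    (∀ a, (∀ b, (a, b) ∉ M) → diagDist (A a) ≤ δ) ∧
    (∀ b, (∀ a, (a, b) ∉ M) → diagDist (B b) ≤ δ)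

noncomputable def dBottle {α β : Type} (A : α → EReal × EReal) (B : β → EReal × EReal) : ℝ≥0∞ :=
  sInf {d : ℝ≥0∞ | ∃ δ : ℝ, 0 ≤ δ ∧ IsDeltaMatching A B (ENNReal.ofReal δ) ∧ d = ENNReal.ofReal δ}

end Matchings

section Measure

noncomputable def persIm {k : Type} [Field k] (V : PersMod k ℝ) (a : EReal) (c : ℝ) :
    Submodule k (V.space c) :=
  if h : ∃ a' : ℝ, a = (a' : EReal) ∧ a' ≤ c then
    LinearMap.range (V.map h.choose c h.choose_spec.2)
  else ⊥

noncomputable def persKer {k : Type} [Field k] (V : PersMod k ℝ) (c : ℝ) (d : EReal) :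
    Submodule k (V.space c) :=
  if h : ∃ d' : ℝ, d = (d' : EReal) ∧ c ≤ d' then
    LinearMap.ker (V.map c h.choose h.choose_spec.2)
  else ⊤

noncomputable def persMeasure {k : Type} [Field k] (V : PersMod k ℝ)
    (a : EReal) (b c : ℝ) (d : EReal) : ℕ∞ :=
  edim k
    (↥(persIm V (b : EReal) c ⊓ persKer V c d) ⧸
      Submodule.comap (persIm V (b : EReal) c ⊓ persKer V c d).subtype
        (persIm V a c ⊓ persKer V c d))

end Measure

section Interleaving

def Interleaved (k : Type) [Field k] (U V : PersMod k ℝ) (δ : ℝ) : Prop :=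
  ∃ (φ : ∀ t : ℝ, U.space t →ₗ[k] V.space (t + δ))
    (ψ : ∀ t : ℝ, V.space t →ₗ[k] U.space (t + δ)),
    (∀ s t (h : s ≤ t),
      (φ t).comp (U.map s t h) = (V.map (s + δ) (t + δ) (by linarith)).comp (φ s)) ∧
    (∀ s t (h : s ≤ t),
      (ψ t).comp (V.map s t h) = (U.map (s + δ) (t + δ) (by linarith)).comp (ψ s)) ∧
    (∀ t (h : t ≤ t + δ + δ), (ψ (t + δ)).comp (φ t) = U.map t (t + δ + δ) h) ∧
    (∀ t (h : t ≤ t + δ + δ), (φ (t + δ)).comp (ψ t) = V.map t (t + δ + δ) h)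

noncomputable def dInter (k : Type) [Field k] (U V : PersMod k ℝ) : ℝ≥0∞ :=
  sInf {d : ℝ≥0∞ | ∃ δ : ℝ, 0 ≤ δ ∧ Interleaved k U V δ ∧ d = ENNReal.ofReal δ}

def QTame (k : Type) [Field k] (V : PersMod k ℝ) : Prop :=
  ∀ s t : ℝ, ∀ h : s < t, erank (V.map s t h.le) ≠ ⊤

def LocFinitePM (k : Type) [Field k] (W : PersMod k ℝ) : Prop :=
  ∃ (L : Type) (J : L → Set ℝ) (hJ : ∀ ℓ, IsIntervalSet (J ℓ)),
    PersIso W (dsum fun ℓ => intervalModule k ℝ (J ℓ) (hJ ℓ)) ∧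
    ∀ S : Set ℝ, Bornology.IsBounded S → {ℓ : L | (J ℓ ∩ S).Nonempty}.Finite

noncomputable def zeroPers (k : Type) [Field k] : PersMod k ℝ where
  space _ := PUnit
  addCommGroup := fun _ => inferInstance
  module := fun _ => inferInstance
  map _ _ _ := 0
  map_id t := LinearMap.ext fun x => Subsingleton.elim _ _
  map_comp r s t h1 h2 := LinearMap.ext fun x => Subsingleton.elim _ _

noncomputable def smoothing {k : Type} [Field k] (V : PersMod k ℝ) (ε : ℝ) (hε : 0 < ε) :
    PersMod k ℝ where
  space t := LinearMap.range (V.map (t - ε) (t + ε) (by linarith))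
  addCommGroup := fun _ => inferInstance
  module := fun _ => inferInstance
  map s t h := LinearMap.restrict (V.map (s + ε) (t + ε) (by linarith))
    (p := LinearMap.range (V.map (s - ε) (s + ε) (by linarith)))
    (q := LinearMap.range (V.map (t - ε) (t + ε) (by linarith)))
    (by
      rintro x ⟨y, rfl⟩
      refine ⟨V.map (s - ε) (t - ε) (by linarith) y, ?_⟩
      have h1 := LinearMap.congr_fun
        (V.map_comp (s - ε) (t - ε) (t + ε) (by linarith) (by linarith)) y
      have h2 := LinearMap.congr_fun
        (V.map_comp (s - ε) (s + ε) (t + ε) (by linarith) (by linarith)) y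
      simp only [LinearMap.comp_apply] at h1 h2
      rw [h1, h2])
  map_id t := by
    refine LinearMap.ext fun x => Subtype.ext ?_
    have := LinearMap.congr_fun (V.map_id (t + ε)) x.1
    simpa [LinearMap.restrict_apply] using this
  map_comp r s t h1 h2 := by
    refine LinearMap.ext fun x => Subtype.ext ?_
    have := LinearMap.congr_fun
      (V.map_comp (r + ε) (s + ε) (t + ε) (by linarith) (by linarith)) x.1
    simpa [LinearMap.restrict_apply] using this

end Interleaving

section Webb

def webbSubmodule (k : Type) [Field k] (t : ℤ) : Submodule k (ℕ → k) where
  carrier := {x | ∀ i : ℕ, (i : ℤ) < -t → x i = 0}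
  add_mem' := by
    intro x y hx hy i hi
    simp [Pi.add_apply, hx i hi, hy i hi]
  zero_mem' := by
    intro i hi
    rfl
  smul_mem' := by
    intro c x hx i hi
    simp [Pi.smul_apply, hx i hi]

noncomputable def webbModule (k : Type) [Field k] : PersMod k ↥{n : ℤ | n ≤ 0} where
  space t := ↥(webbSubmodule k t.1)
  addCommGroup := fun _ => inferInstance
  module := fun _ => inferInstance
  map s t h := Submodule.inclusion (by
    intro x hx
    have hx' : ∀ i : ℕ, (i : ℤ) < -s.1 → x i = 0 := hx
    intro i hi
    exact hx' i (lt_of_lt_of_le hi (neg_le_neg h)))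
  map_id t := LinearMap.ext fun x => rfl
  map_comp r s t h1 h2 := LinearMap.ext fun x => rfl

end Webb

section Decorated

/-- `decMem t x` : the real number `t` belongs to the interval described by the
decorated pair `x = ((p, εp), (q, εq))`, where the decoration `false` means `⁻`
and `true` means `⁺`. -/
def decMem (t : ℝ) (x : (EReal × Bool) × (EReal × Bool)) : Prop :=
  (x.1.1 < (t : EReal) ∨ (x.1.1 = (t : EReal) ∧ x.1.2 = false)) ∧
  ((t : EReal) < x.2.1 ∨ ((t : EReal) = x.2.1 ∧ x.2.2 = true))

/-- A valid decorated pair: the left coordinate is `p⁻`/`p⁺` for a real `p` or `−∞⁺`,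
the right coordinate is `q⁻`/`q⁺` for a real `q` or `+∞⁻`, and the corresponding
interval is nonempty (i.e. `p* < q*`). -/
def ValidDec (x : (EReal × Bool) × (EReal × Bool)) : Prop :=
  (x.1.1 = ⊥ → x.1.2 = true) ∧ x.1.1 ≠ ⊤ ∧ (x.2.1 = ⊤ → x.2.2 = false) ∧ x.2.1 ≠ ⊥ ∧
  {t : ℝ | decMem t x}.Nonempty

/-- The decorated pair `x` belongs to the rectangle `[a,b] × [c,d]`, i.e.
`[b,c] ⊆ ⟨p*,q*⟩ ⊆ (a,d)`. -/
def decInRect (x : (EReal × Bool) × (EReal × Bool)) (a : EReal) (b c : ℝ) (d : EReal) : Prop :=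
  (∀ t ∈ Set.Icc b c, decMem t x) ∧
  (∀ t : ℝ, decMem t x → a < (t : EReal) ∧ (t : EReal) < d)

/-- `Dgm` is (a labelling of) the decorated persistence diagram of `V`. -/
def IsDgmOf {k : Type} [Field k] (V : PersMod k ℝ) {ι : Type}
    (Dgm : ι → (EReal × Bool) × (EReal × Bool)) : Prop :=
  (∀ i, ValidDec (Dgm i)) ∧
  ∀ (a : EReal) (b c : ℝ) (d : EReal), a < (b : EReal) → b ≤ c → (c : EReal) < d →
    persMeasure V a b c d = ecard {i : ι // decInRect (Dgm i) a b c d}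

end Decorated

section RMeasure

/-- `[a,b] × [c,d]` is a (nondegenerate) rectangle contained in `D`. -/
def RectIn (D : Set (ℝ × ℝ)) (a b c d : ℝ) : Prop :=
  a < b ∧ c < d ∧ Set.Icc a b ×ˢ Set.Icc c d ⊆ D

/-- An r-measure on `D`: additivity under horizontal and vertical splitting. -/
def IsRMeasure (D : Set (ℝ × ℝ)) (μ : ℝ → ℝ → ℝ → ℝ → ℕ∞) : Prop :=
  (∀ a p b c d, a < p → p < b → RectIn D a b c d → μ a b c d = μ a p c d + μ p b c d) ∧
  (∀ a b c q d, c < q → q < d → RectIn D a b c d → μ a b c d = μ a b c q + μ a b q d)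

/-- Membership of a decorated point of the plane (`Bool` decoration: `true` = `⁺`,
`false` = `⁻`) in the closed rectangle `[a,b] × [c,d]`. -/
def dptMem (x : (ℝ × Bool) × (ℝ × Bool)) (a b c d : ℝ) : Prop :=
  a ≤ x.1.1 ∧ x.1.1 ≤ b ∧ c ≤ x.2.1 ∧ x.2.1 ≤ d ∧
  (x.1.1 = a → x.1.2 = true) ∧ (x.1.1 = b → x.1.2 = false) ∧
  (x.2.1 = c → x.2.2 = true) ∧ (x.2.1 = d → x.2.2 = false)

/-- The r-interior `D•` of `D`: decorated points contained in some rectangle of `D`. -/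
def rInt (D : Set (ℝ × ℝ)) : Set ((ℝ × Bool) × (ℝ × Bool)) :=
  {x | ∃ a b c d, RectIn D a b c d ∧ dptMem x a b c d}

/-- The number of decorated points, counted with multiplicity `m`, lying in the
rectangle `[a,b] × [c,d]`. -/
noncomputable def dcount (m : (ℝ × Bool) × (ℝ × Bool) → ℕ) (a b c d : ℝ) : ℕ∞ :=
  ecard (Σ x : {x : (ℝ × Bool) × (ℝ × Bool) // dptMem x a b c d}, Fin (m x.1))

end RMeasure


/-!
Choose `η`-matchings `M n` for a sequence `η n ↓ δ` and let `M` be their limit along an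
ultrafilter `U` finer than `atTop`: a pair belongs to `M` iff it belongs to `M n` for `U`-almost
all `n`. Then `M` is a matching whose pairs are `δ`-close. If a point `a` is farther than `δ`
from the diagonal, pick `δ < η < diagDist a`; for almost all `n` the point `a` is matched in
`M n` to a partner `η`-close to it. Local finiteness leaves only finitely many such partners,
so one of them is the partner of `a` in almost all `M n`, that is, in `M`.
-/

open Filter Topology

section Geometry

theorem eDiff_comm (x y : EReal) : eDiff x y = eDiff y x := by
  simp only [eDiff, eq_comm (a := x), abs_sub_comm x.toReal]
  congr 2
  simp only [eq_iff_iff]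
  tauto

theorem dPt_comm (x y : EReal × EReal) : dPt x y = dPt y x := by
  rw [dPt, dPt, eDiff_comm x.1, eDiff_comm x.2]

theorem le_add_of_eDiff_le {x y : EReal} {r : ℝ} (hr : 0 ≤ r)
    (h : eDiff x y ≤ ENNReal.ofReal r) : y ≤ x + r := by
  induction x <;> induction y <;> simp [eDiff] at h ⊢
  case coe.coe x y =>
    have hxy : |x - y| ≤ r := by
      split_ifs at h with hxy
      · simpa [hxy] using hr
      · exact (ENNReal.ofReal_le_ofReal_iff hr).1 h
    exact_mod_cast (by linarith [(abs_le.1 hxy).1] : y ≤ x + r)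

theorem add_lt_sub_of_lt_diagDist {p q : EReal} (hpq : p < q) {r : ℝ}
    (h : ENNReal.ofReal r < diagDist (p, q)) : p + r < q - r := by
  induction p <;> induction q <;> simp [diagDist] at h hpq ⊢
  case bot.coe q => exact_mod_cast EReal.bot_lt_coe (q - r)
  case coe.top p => exact_mod_cast EReal.coe_lt_top (p + r)
  case coe.coe p q =>
    have := (ENNReal.ofReal_lt_ofReal_iff'.1 h).1
    exact_mod_cast (by linarith : p + r < q - r)

def IsLocallyFinite {α : Type} (A : α → EReal × EReal) : Prop :=
  ∀ a b c d : EReal, a < b → b < c → c < d →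
    {x : α | a ≤ (A x).1 ∧ (A x).1 ≤ b ∧ c ≤ (A x).2 ∧ (A x).2 ≤ d}.Finite

variable {α : Type} {A : α → EReal × EReal}

theorem IsLocallyFinite.finite_quadrant (hA : IsLocallyFinite A) {b c : EReal} (hbc : b < c) :
    {x | (A x).1 ≤ b ∧ c ≤ (A x).2}.Finite := by
  obtain ⟨m, hbm, hmc⟩ := exists_between hbc
  obtain ⟨b', hbb', hb'm⟩ := exists_between hbm
  obtain ⟨c', hmc', hc'c⟩ := exists_between hmc
  refine (hA ⊥ b' c' ⊤ (bot_le.trans_lt hbb') (hb'm.trans hmc') (hc'c.trans_le le_top)).subset ?_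
  rintro x ⟨hxb, hcx⟩
  exact ⟨bot_le, hxb.trans hbb'.le, hc'c.le.trans hcx, le_top⟩

theorem IsLocallyFinite.finite_setOf_dPt_le (hA : IsLocallyFinite A) {pt : EReal × EReal}
    (hpt : pt.1 < pt.2) {η : ℝ≥0∞} (hη : η < diagDist pt) :
    {x | dPt pt (A x) ≤ η}.Finite := by
  obtain ⟨p, q⟩ := pt
  obtain ⟨r, hr, rfl⟩ : ∃ r : ℝ, 0 ≤ r ∧ η = ENNReal.ofReal r :=
    ⟨η.toReal, ENNReal.toReal_nonneg, (ENNReal.ofReal_toReal hη.ne_top).symm⟩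
  refine (hA.finite_quadrant (add_lt_sub_of_lt_diagDist hpt hη)).subset fun x hx => ⟨?_, ?_⟩
  · exact le_add_of_eDiff_le hr ((le_max_left _ _).trans hx)
  · refine EReal.sub_le_of_le_add (le_add_of_eDiff_le hr ?_)
    rw [eDiff_comm]
    exact (le_max_right _ _).trans hx

end Geometry

section MatchingLimits

variable {ι γ : Type*} {α β : Type}

theorem IsMatching.liminf {l : Filter ι} [l.NeBot] {M : ι → Set (α × β)}
    (hM : ∀ i, IsMatching (M i)) : IsMatching (liminf M l) := by
  simp only [IsMatching, mem_liminf_iff_eventually_mem]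
  constructor
  · intro a b b' hb hb'
    obtain ⟨i, hi, hi'⟩ := (hb.and hb').exists
    exact (hM i).1 a b b' hi hi'
  · intro a a' b ha ha'
    obtain ⟨i, hi, hi'⟩ := (ha.and ha').exists
    exact (hM i).2 a a' b hi hi'

theorem Ultrafilter.exists_eventually_mem_of_lt (U : Ultrafilter ι) {P : ι → Set γ}
    {c : γ → ℝ≥0∞} {ε : ι → ℝ≥0∞} {δ u : ℝ≥0∞} (hε : ∀ η > δ, ∀ᶠ i in U, ε i ≤ η)
    (hc : ∀ i, ∀ x ∈ P i, c x ≤ ε i) (hu : ∀ i, (∀ x, x ∉ P i) → u ≤ ε i)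
    (hfin : ∀ η < u, {x | c x ≤ η}.Finite) (hδu : δ < u) : ∃ x, ∀ᶠ i in U, x ∈ P i := by
  obtain ⟨η, hδη, hηu⟩ := exists_between hδu
  have hpartner : ∀ᶠ i in U, ∃ x ∈ {x | c x ≤ η}, x ∈ P i := by
    filter_upwards [hε η hδη] with i hi
    by_contra! hempty
    have hunmatched : ∀ x, x ∉ P i := fun x hx => hempty x ((hc i x hx).trans hi) hx
    exact ((hu i hunmatched).trans hi).not_gt hηu
  obtain ⟨x, -, hx⟩ := (U.eventually_exists_mem_iff (hfin η hηu)).1 hpartner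
  exact ⟨x, hx⟩

variable {A : α → EReal × EReal} {B : β → EReal × EReal}

theorem IsDeltaMatching.of_tendsto {l : Filter ι} [l.NeBot] {ε : ι → ℝ≥0∞} {δ : ℝ≥0∞}
    (hε : Tendsto ε l (𝓝 δ)) (hM : ∀ i, IsDeltaMatching A B (ε i))
    (hfinA : ∀ a, ∀ η < diagDist (A a), {b | dPt (A a) (B b) ≤ η}.Finite)
    (hfinB : ∀ b, ∀ η < diagDist (B b), {a | dPt (A a) (B b) ≤ η}.Finite) :
    IsDeltaMatching A B δ := by
  choose M hmatch hdist hunA hunB using hM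
  set U := Ultrafilter.of l
  have hεU : ∀ η > δ, ∀ᶠ i in U, ε i ≤ η := fun η hη =>
    Ultrafilter.of_le l ((hε.eventually (gt_mem_nhds hη)).mono fun _ => le_of_lt)
  refine ⟨liminf M U, IsMatching.liminf hmatch, fun p hp => ?_, fun a ha => ?_, fun b hb => ?_⟩
  · refine le_of_forall_gt_imp_ge_of_dense fun η hη => ?_
    obtain ⟨i, hpi, hi⟩ := ((mem_liminf_iff_eventually_mem.1 hp).and (hεU η hη)).exists
    exact (hdist i p hpi).trans hi
  · by_contra! hδ
    obtain ⟨b, hb⟩ := U.exists_eventually_mem_of_lt (P := fun i => {b | (a, b) ∈ M i}) hεU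
      (fun i b => hdist i (a, b)) (hunA · a) (hfinA a) hδ
    exact ha b (mem_liminf_iff_eventually_mem.2 hb)
  · by_contra! hδ
    obtain ⟨a, ha⟩ := U.exists_eventually_mem_of_lt (P := fun i => {a | (a, b) ∈ M i}) hεU
      (fun i a => hdist i (a, b)) (hunB · b) (hfinB b) hδ
    exact hb a (mem_liminf_iff_eventually_mem.2 ha)

end MatchingLimits

theorem stmt15_general {α β : Type} (A : α → EReal × EReal) (B : β → EReal × EReal)
    (hA : ∀ a, (A a).1 < (A a).2) (hB : ∀ b, (B b).1 < (B b).2)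
    (hAlf : ∀ a b c d : EReal, a < b → b < c → c < d →
      {x : α | a ≤ (A x).1 ∧ (A x).1 ≤ b ∧ c ≤ (A x).2 ∧ (A x).2 ≤ d}.Finite)
    (hBlf : ∀ a b c d : EReal, a < b → b < c → c < d →
      {x : β | a ≤ (B x).1 ∧ (B x).1 ≤ b ∧ c ≤ (B x).2 ∧ (B x).2 ≤ d}.Finite)
    (δ : ℝ)
    (h : ∀ η : ℝ, δ < η → IsDeltaMatching A B (ENNReal.ofReal η)) :
    IsDeltaMatching A B (ENNReal.ofReal δ) := by
  obtain ⟨η, -, hδη, hη⟩ := exists_seq_strictAnti_tendsto δ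
  refine IsDeltaMatching.of_tendsto (ENNReal.tendsto_ofReal hη) (fun n => h _ (hδη n))
    (fun a _ => IsLocallyFinite.finite_setOf_dPt_le hBlf (hA a)) (fun b _ hlt => ?_)
  simpa only [dPt_comm (A _)] using IsLocallyFinite.finite_setOf_dPt_le hAlf (hB b) hlt

theorem stmt15 {α β : Type} (A : α → EReal × EReal) (B : β → EReal × EReal)
    (hA : ∀ a, (A a).1 < (A a).2) (hB : ∀ b, (B b).1 < (B b).2)
    (hAlf : ∀ a b c d : EReal, a < b → b < c → c < d →
      {x : α | a ≤ (A x).1 ∧ (A x).1 ≤ b ∧ c ≤ (A x).2 ∧ (A x).2 ≤ d}.Finite)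
    (hBlf : ∀ a b c d : EReal, a < b → b < c → c < d →
      {x : β | a ≤ (B x).1 ∧ (B x).1 ≤ b ∧ c ≤ (B x).2 ∧ (B x).2 ≤ d}.Finite)
    (δ : ℝ) (hδ : 0 ≤ δ)
    (h : ∀ η : ℝ, δ < η → IsDeltaMatching A B (ENNReal.ofReal η)) :
    IsDeltaMatching A B (ENNReal.ofReal δ) :=
  stmt15_general A B hA hB hAlf hBlf δ h
end

section
/- Box lemma: let U and V be persistence modules over ℝ that are δ-interleaved (δ ≥ 0). Let −∞ ≤ a < b ≤ c < d ≤ +∞ with b and c finite and b + δ ≤ c − δ. Then μ_U([a,b]×[c,d]) ≤ μ_V([a−δ, b+δ]×[c−δ, d+δ]) and μ_V([a,b]×[c,d]) ≤ μ_U([a−δ, b+δ]×[c−δ, d+δ]), with the conventions −∞ − δ = −∞ and +∞ + δ = +∞. -/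
attribute [local instance] Classical.propDecidable

open scoped ENNReal

/-!
With `f = V(b+δ → c-δ) ∘ φ_b : U_b → V_{c-δ}` and `g = U(c-δ+δ → c) ∘ ψ_{c-δ} : V_{c-δ} → U_c`,
the interleaving identities give `g ∘ f = U(b → c)`. So every element `g (f x)` of
`im U(b → c) ∩ ker U(c → d)` comes from `f x ∈ im V(b+δ → c-δ)`, and `f x` dies by time `d + δ`
because `φ ∘ ψ` is the shift by `2δ`. Moreover `g` carries `im V(a-δ → c-δ)` into `im U(a → c)`.
The inequality then follows from the linear-algebra fact that if `g` maps `P' ∩ g⁻¹ P` onto `P`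
and `Q'` into `Q`, then `dim P/(P ∩ Q) ≤ dim P'/(P' ∩ Q')`.
-/

section BoxLemma

variable {k : Type} [Field k]

section QuotientDim

variable {M N : Type} [AddCommGroup M] [Module k M] [AddCommGroup N] [Module k N]

lemma edim_le_of_injective (f : M →ₗ[k] N) (hf : Function.Injective f) :
    edim k M ≤ edim k N :=
  Cardinal.toENat.monotone' (f.rank_le_of_injective hf)

lemma edim_le_of_surjective (f : M →ₗ[k] N) (hf : Function.Surjective f) :
    edim k N ≤ edim k M :=
  Cardinal.toENat.monotone' (f.rank_le_of_surjective hf)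

lemma edim_quotient_comap_subtype_mono {W P Q : Submodule k M} (hW : W ≤ P) :
    edim k (W ⧸ Q.comap W.subtype) ≤ edim k (P ⧸ Q.comap P.subtype) := by
  refine edim_le_of_injective (Submodule.mapQ _ _ (Submodule.inclusion hW) le_rfl) ?_
  exact LinearMap.ker_eq_bot.mp <| Submodule.ker_liftQ_eq_bot _ _ _
    fun _ hw => (Submodule.Quotient.mk_eq_zero (Q.comap P.subtype)).mp hw

lemma edim_quotient_comap_subtype_le_of_le_map (g : M →ₗ[k] N) {W Q' : Submodule k M}
    {P Q : Submodule k N} (hmaps : W ≤ P.comap g) (hsurj : P ≤ W.map g)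
    (hQ : ∀ z ∈ W, z ∈ Q' → g z ∈ Q) :
    edim k (P ⧸ Q.comap P.subtype) ≤ edim k (W ⧸ Q'.comap W.subtype) := by
  refine edim_le_of_surjective
    (Submodule.mapQ _ _ (g.restrict hmaps) fun z hz => hQ z z.2 hz) ?_
  intro q
  obtain ⟨⟨x, hx⟩, rfl⟩ := Submodule.mkQ_surjective _ q
  obtain ⟨w, hw, rfl⟩ := hsurj hx
  exact ⟨Submodule.Quotient.mk ⟨w, hw⟩, rfl⟩

lemma edim_quotient_comap_subtype_le (g : M →ₗ[k] N) {P Q : Submodule k N}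
    {P' Q' : Submodule k M} (hP : P ≤ P'.map g) (hQ : ∀ z ∈ P', g z ∈ P → z ∈ Q' → g z ∈ Q) :
    edim k (P ⧸ Q.comap P.subtype) ≤ edim k (P' ⧸ Q'.comap P'.subtype) := by
  have hsurj : P ≤ (P' ⊓ P.comap g).map g := by
    intro x hx
    obtain ⟨y, hy, rfl⟩ := hP hx
    exact ⟨y, ⟨hy, hx⟩, rfl⟩
  calc edim k (P ⧸ Q.comap P.subtype)
      ≤ edim k (↥(P' ⊓ P.comap g) ⧸ Q'.comap (P' ⊓ P.comap g).subtype) :=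
        edim_quotient_comap_subtype_le_of_le_map g inf_le_right hsurj
          fun z hz => hQ z hz.1 hz.2
    _ ≤ edim k (P' ⧸ Q'.comap P'.subtype) := edim_quotient_comap_subtype_mono inf_le_left

end QuotientDim

namespace PersMod

variable {T : Type} [Preorder T] (V : PersMod k T)

@[simp]
lemma map_map {r s t : T} (h₁ : r ≤ s) (h₂ : s ≤ t) (x : V.space r) :
    V.map s t h₂ (V.map r s h₁ x) = V.map r t (h₁.trans h₂) x :=
  LinearMap.congr_fun (V.map_comp r s t h₁ h₂) x

lemma range_map_eq_of_eq {s s' t : T} (e : s = s') (h : s ≤ t) (h' : s' ≤ t) :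
    LinearMap.range (V.map s t h) = LinearMap.range (V.map s' t h') := by
  subst e; rfl

lemma ker_map_eq_of_eq {s t t' : T} (e : t = t') (h : s ≤ t) (h' : s ≤ t') :
    LinearMap.ker (V.map s t h) = LinearMap.ker (V.map s t' h') := by
  subst e; rfl

end PersMod

section PersMeasure

variable (V : PersMod k ℝ)

lemma persIm_coe {x c : ℝ} (h : x ≤ c) : persIm V x c = LinearMap.range (V.map x c h) := by
  have hex : ∃ a' : ℝ, (x : EReal) = a' ∧ a' ≤ c := ⟨x, rfl, h⟩
  have e : hex.choose = x := by exact_mod_cast hex.choose_spec.1.symm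
  rw [persIm, dif_pos hex]
  exact V.range_map_eq_of_eq e _ _

lemma persIm_bot (c : ℝ) : persIm V ⊥ c = ⊥ :=
  dif_neg fun ⟨_, h, _⟩ => EReal.bot_ne_coe _ h

lemma persKer_coe {c x : ℝ} (h : c ≤ x) : persKer V c x = LinearMap.ker (V.map c x h) := by
  have hex : ∃ d' : ℝ, (x : EReal) = d' ∧ c ≤ d' := ⟨x, rfl, h⟩
  have e : hex.choose = x := by exact_mod_cast hex.choose_spec.1.symm
  rw [persKer, dif_pos hex]
  exact V.ker_map_eq_of_eq e _ _

lemma persKer_top (c : ℝ) : persKer V c ⊤ = ⊤ :=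
  dif_neg fun ⟨_, h, _⟩ => EReal.top_ne_coe _ h

end PersMeasure

lemma persMeasure_le_of_factor {U V : PersMod k ℝ} {a a' : EReal} {b c b' c' : ℝ} {d d' : EReal}
    (hbc : b ≤ c) (f : U.space b →ₗ[k] V.space c') (g : V.space c' →ₗ[k] U.space c)
    (hgf : ∀ x, g (f x) = U.map b c hbc x) (hf : LinearMap.range f ≤ persIm V b' c')
    (hker : ∀ z, g z ∈ persKer U c d → z ∈ persKer V c' d')
    (him : ∀ z ∈ persIm V a' c', g z ∈ persIm U a c) :
    persMeasure U a b c d ≤ persMeasure V a' b' c' d' := by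
  refine edim_quotient_comap_subtype_le g ?_ fun z _ hgz hz' => ⟨him z hz'.1, hgz.2⟩
  rw [persIm_coe U hbc]
  rintro _ ⟨⟨x, rfl⟩, hx⟩
  rw [← hgf] at hx ⊢
  exact ⟨f x, ⟨hf ⟨x, rfl⟩, hker _ hx⟩, rfl⟩

lemma Interleaved.symm {U V : PersMod k ℝ} {δ : ℝ} (h : Interleaved k U V δ) :
    Interleaved k V U δ :=
  let ⟨φ, ψ, hφ, hψ, hψφ, hφψ⟩ := h
  ⟨ψ, φ, hψ, hφ, hφψ, hψφ⟩

lemma persMeasure_le_of_interleaved {U V : PersMod k ℝ} {δ : ℝ} (hδ : 0 ≤ δ)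
    (hI : Interleaved k U V δ) {a : EReal} {b c : ℝ} {d : EReal}
    (hab : a < b) (hbc : b ≤ c) (hcd : (c : EReal) < d) (hthick : b + δ ≤ c - δ) :
    persMeasure U a b c d ≤ persMeasure V (a - δ) (b + δ) (c - δ) (d + δ) := by
  obtain ⟨φ, ψ, hφ, hψ, hψφ, hφψ⟩ := hI
  have hφ' := fun s t h x => LinearMap.congr_fun (hφ s t h) x
  have hψ' := fun s t h x => LinearMap.congr_fun (hψ s t h) x
  have hψφ' := fun t h x => LinearMap.congr_fun (hψφ t h) x
  have hφψ' := fun t h x => LinearMap.congr_fun (hφψ t h) x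
  simp only [LinearMap.comp_apply] at hφ' hψ' hψφ' hφψ'
  -- `U.space (c - δ + δ)` is not definitionally `U.space c`, hence the transition map.
  set g : V.space (c - δ) →ₗ[k] U.space c :=
    (U.map (c - δ + δ) c (by linarith)).comp (ψ (c - δ))
  refine persMeasure_le_of_factor hbc ((V.map (b + δ) (c - δ) hthick).comp (φ b)) g
    (fun x => ?_) ?_ ?_ ?_
  · simp only [g, LinearMap.comp_apply, hψ', hψφ' b (by linarith), PersMod.map_map]
  · rw [persIm_coe V hthick]
    exact LinearMap.range_comp_le_range _ _
  · induction d using EReal.rec with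
    | bot => exact absurd hcd not_lt_bot
    | top => intro z _; rw [EReal.top_add_coe, persKer_top]; trivial
    | coe d =>
      have hcd' : c ≤ d := by exact_mod_cast hcd.le
      intro z hz
      rw [persKer_coe U hcd', LinearMap.mem_ker] at hz
      rw [← EReal.coe_add, persKer_coe V (by linarith), LinearMap.mem_ker]
      calc V.map (c - δ) (d + δ) _ z
          = V.map (c - δ + δ + δ) (d + δ) (by linarith) (φ (c - δ + δ) (ψ (c - δ) z)) := by
            rw [hφψ' (c - δ) (by linarith), PersMod.map_map]
        _ = φ d (U.map c d hcd' (g z)) := by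
            rw [← hφ' _ _ (by linarith)]; simp only [g, LinearMap.comp_apply, PersMod.map_map]
        _ = 0 := by rw [hz, map_zero]
  · induction a using EReal.rec with
    | bot =>
      intro z hz
      rw [EReal.bot_sub, persIm_bot, Submodule.mem_bot] at hz
      rw [hz, map_zero]
      exact zero_mem _
    | top => exact absurd hab not_top_lt
    | coe a =>
      have hac : a ≤ c := by
        have : a < b := by exact_mod_cast hab
        linarith
      rw [← EReal.coe_sub, persIm_coe V (show a - δ ≤ c - δ by linarith), persIm_coe U hac]
      rintro _ ⟨w, rfl⟩
      refine ⟨U.map (a - δ + δ) a (by linarith) (ψ (a - δ) w), ?_⟩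
      simp only [g, LinearMap.comp_apply, hψ', PersMod.map_map]

end BoxLemma

theorem stmt16 {k : Type} [Field k] (U V : PersMod k ℝ) (δ : ℝ) (hδ : 0 ≤ δ)
    (hI : Interleaved k U V δ) (a : EReal) (b c : ℝ) (d : EReal)
    (hab : a < (b : EReal)) (hbc : b ≤ c) (hcd : (c : EReal) < d)
    (hthick : b + δ ≤ c - δ) :
    persMeasure U a b c d ≤
      persMeasure V (a - (δ : EReal)) (b + δ) (c - δ) (d + (δ : EReal)) ∧
    persMeasure V a b c d ≤
      persMeasure U (a - (δ : EReal)) (b + δ) (c - δ) (d + (δ : EReal)) :=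
  ⟨persMeasure_le_of_interleaved hδ hI hab hbc hcd hthick,
    persMeasure_le_of_interleaved hδ hI.symm hab hbc hcd hthick⟩
end
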